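/- Let E ⊆ ℝ be the standard middle-thirds Cantor set and U = (0,1) \ E. Then the boundary Ẽ of Û = {(x, t) ∈ ℝ × ℝ : x ∈ U, |t| < d_E(x)} in ℝ² is connected. -/

import Mathlib

/-!
`Û` is open, and its closure is `{(x, t) : x ∈ [0, 1], |t| ≤ d_E(x)}`: over `U` one reaches
`|t| = d_E(x)` vertically, and over `E` (where `d_E = 0`) one reaches `(x, 0)` horizontally
because `U` is dense in `[0, 1]`, the Cantor set being nowhere dense. Hence `Ẽ` is the union of
the graphs of `d_E` and `-d_E` over `[0, 1]`, two arcs which meet at `(0, 0)`.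
-/

open Set Metric

section SymmetricRegion

variable {X : Type*} [TopologicalSpace X] {U : Set X} {f : X → ℝ}

theorem isOpen_setOf_abs_lt (hU : IsOpen U) (hf : Continuous f) :
    IsOpen {p : X × ℝ | p.1 ∈ U ∧ |p.2| < f p.1} :=
  (hU.preimage continuous_fst).inter
    (isOpen_lt (continuous_abs.comp continuous_snd) (hf.comp continuous_fst))

theorem closure_setOf_abs_lt (hf : Continuous f) (hpos : ∀ x ∈ U, 0 < f x)
    (hzero : ∀ x ∈ closure U \ U, f x = 0) :
    closure {p : X × ℝ | p.1 ∈ U ∧ |p.2| < f p.1} =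
      {p : X × ℝ | p.1 ∈ closure U ∧ |p.2| ≤ f p.1} := by
  set S := {p : X × ℝ | p.1 ∈ U ∧ |p.2| < f p.1}
  have hK : IsClosed {p : X × ℝ | p.1 ∈ closure U ∧ |p.2| ≤ f p.1} :=
    (isClosed_closure.preimage continuous_fst).inter
      (isClosed_le (continuous_abs.comp continuous_snd) (hf.comp continuous_fst))
  refine subset_antisymm
    (closure_minimal (fun p hp => ⟨subset_closure hp.1, hp.2.le⟩) hK) ?_
  rintro ⟨x, t⟩ ⟨hx, ht⟩
  by_cases hxU : x ∈ U
  · have hsegment : MapsTo (fun r : ℝ => (x, r * t)) (Ico 0 1) S := by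
      rintro r ⟨hr₀, hr₁⟩
      refine ⟨hxU, ?_⟩
      rw [abs_mul, abs_of_nonneg hr₀]
      rcases (abs_nonneg t).eq_or_lt with ht₀ | ht₀
      · simpa [← ht₀] using hpos x hxU
      · calc r * |t| < 1 * |t| := by gcongr
          _ ≤ f x := by rwa [one_mul]
    have hone : (1 : ℝ) ∈ closure (Ico 0 1) := by
      rw [closure_Ico zero_ne_one]
      exact right_mem_Icc.2 zero_le_one
    simpa using map_mem_closure (by fun_prop) hone hsegment
  · have ht₀ : t = 0 := by simpa [hzero x ⟨hx, hxU⟩] using ht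
    have hhorizontal : MapsTo (fun y : X => (y, (0 : ℝ))) U S :=
      fun y hy => ⟨hy, by simpa using hpos y hy⟩
    simpa [ht₀] using map_mem_closure (by fun_prop) hx hhorizontal

theorem frontier_setOf_abs_lt (hU : IsOpen U) (hf : Continuous f) (hpos : ∀ x ∈ U, 0 < f x)
    (hzero : ∀ x ∈ frontier U, f x = 0) :
    frontier {p : X × ℝ | p.1 ∈ U ∧ |p.2| < f p.1} =
      {p : X × ℝ | p.1 ∈ closure U ∧ |p.2| = f p.1} := by
  rw [hU.frontier_eq] at hzero
  rw [frontier, (isOpen_setOf_abs_lt hU hf).interior_eq, closure_setOf_abs_lt hf hpos hzero]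
  ext ⟨x, t⟩
  simp only [mem_sdiff, mem_ofPred_eq, not_and, not_lt]
  constructor
  · rintro ⟨⟨hx, ht⟩, hS⟩
    refine ⟨hx, ht.antisymm ?_⟩
    by_cases hxU : x ∈ U
    · exact hS hxU
    · simp [hzero x ⟨hx, hxU⟩]
  · rintro ⟨hx, ht⟩
    exact ⟨⟨hx, ht.le⟩, fun _ => ht.ge⟩

theorem isConnected_setOf_abs_eq {s : Set X} (hs : IsConnected s) (hf : ContinuousOn f s)
    (hnonneg : ∀ x ∈ s, 0 ≤ f x) (hzero : ∃ x ∈ s, f x = 0) :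
    IsConnected {p : X × ℝ | p.1 ∈ s ∧ |p.2| = f p.1} := by
  have hgraphs : {p : X × ℝ | p.1 ∈ s ∧ |p.2| = f p.1} =
      (fun x => (x, f x)) '' s ∪ (fun x => (x, -f x)) '' s := by
    ext ⟨x, t⟩
    simp only [mem_ofPred_eq, mem_union, mem_image, Prod.mk.injEq]
    constructor
    · rintro ⟨hx, ht⟩
      rcases (abs_eq (hnonneg x hx)).1 ht with rfl | rfl
      exacts [Or.inl ⟨x, hx, rfl, rfl⟩, Or.inr ⟨x, hx, rfl, rfl⟩]
    · rintro (⟨y, hy, rfl, rfl⟩ | ⟨y, hy, rfl, rfl⟩)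
      · exact ⟨hy, abs_of_nonneg (hnonneg y hy)⟩
      · exact ⟨hy, by rw [abs_neg, abs_of_nonneg (hnonneg y hy)]⟩
  obtain ⟨x₀, hx₀, hfx₀⟩ := hzero
  rw [hgraphs]
  refine IsConnected.union ⟨(x₀, 0), ⟨x₀, hx₀, by simp [hfx₀]⟩, ⟨x₀, hx₀, by simp [hfx₀]⟩⟩
    (hs.image _ (continuousOn_id.prodMk hf)) (hs.image _ (continuousOn_id.prodMk hf.neg))

end SymmetricRegion

theorem one_mem_preCantorSet (n : ℕ) : (1 : ℝ) ∈ preCantorSet n := by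
  induction n with
  | zero => simp
  | succ n ih => exact Or.inr ⟨1, ih, by norm_num⟩

theorem one_mem_cantorSet : (1 : ℝ) ∈ cantorSet :=
  mem_iInter.2 one_mem_preCantorSet

theorem mem_cantorSet_of_div_three_mem {y : ℝ} (hy : y ≤ 1) (h : y / 3 ∈ cantorSet) :
    y ∈ cantorSet := by
  rw [cantorSet_eq_union_halves] at h
  rcases h with ⟨z, hz, hzy⟩ | ⟨z, hz, hzy⟩
  · rwa [show y = z by linarith]
  · linarith [(cantorSet_subset_unitInterval hz).1]

theorem mem_cantorSet_of_two_add_div_three_mem {y : ℝ} (hy : 0 ≤ y)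
    (h : (2 + y) / 3 ∈ cantorSet) : y ∈ cantorSet := by
  rw [cantorSet_eq_union_halves] at h
  rcases h with ⟨z, hz, hzy⟩ | ⟨z, hz, hzy⟩
  · linarith [(cantorSet_subset_unitInterval hz).2]
  · rwa [show y = z by linarith]

theorem notMem_cantorSet_of_mem_Ioo {x : ℝ} (hx : x ∈ Ioo (1 / 3 : ℝ) (2 / 3)) :
    x ∉ cantorSet := by
  rw [cantorSet_eq_union_halves]
  rintro (⟨z, hz, rfl⟩ | ⟨z, hz, rfl⟩)
  · linarith [hx.1, (cantorSet_subset_unitInterval hz).2]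
  · linarith [hx.2, (cantorSet_subset_unitInterval hz).1]

theorem exists_mem_Ioo_diff_cantorSet_abs_sub_le (n : ℕ) {x : ℝ} (hx : x ∈ Icc (0 : ℝ) 1) :
    ∃ y ∈ Ioo (0 : ℝ) 1 \ cantorSet, |x - y| ≤ (1 / 3 : ℝ) ^ n := by
  induction n generalizing x with
  | zero =>
    refine ⟨1 / 2, ⟨by norm_num, notMem_cantorSet_of_mem_Ioo (by norm_num)⟩, ?_⟩
    rw [pow_zero, abs_sub_le_iff]
    constructor <;> linarith [hx.1, hx.2]
  | succ n ih =>
    rcases le_or_gt x (1 / 3) with hx₁ | hx₁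
    · obtain ⟨y, ⟨hy, hyC⟩, hxy⟩ := ih (x := 3 * x) ⟨by linarith [hx.1], by linarith⟩
      refine ⟨y / 3, ⟨⟨by linarith [hy.1], by linarith [hy.2]⟩,
        fun h => hyC (mem_cantorSet_of_div_three_mem hy.2.le h)⟩, ?_⟩
      calc |x - y / 3| = |3 * x - y| / 3 := by
            rw [show x - y / 3 = (3 * x - y) / 3 by ring, abs_div, abs_of_pos (three_pos (α := ℝ))]
        _ ≤ (1 / 3) ^ (n + 1) := by rw [pow_succ]; linarith
    rcases le_or_gt (2 / 3) x with hx₂ | hx₂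
    · obtain ⟨y, ⟨hy, hyC⟩, hxy⟩ := ih (x := 3 * x - 2) ⟨by linarith, by linarith [hx.2]⟩
      refine ⟨(2 + y) / 3, ⟨⟨by linarith [hy.1], by linarith [hy.2]⟩,
        fun h => hyC (mem_cantorSet_of_two_add_div_three_mem hy.1.le h)⟩, ?_⟩
      calc |x - (2 + y) / 3| = |3 * x - 2 - y| / 3 := by
            rw [show x - (2 + y) / 3 = (3 * x - 2 - y) / 3 by ring, abs_div,
              abs_of_pos (three_pos (α := ℝ))]
        _ ≤ (1 / 3) ^ (n + 1) := by rw [pow_succ]; linarith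
    · exact ⟨x, ⟨⟨by linarith, by linarith⟩, notMem_cantorSet_of_mem_Ioo ⟨hx₁, hx₂⟩⟩,
        by rw [sub_self, abs_zero]; positivity⟩

theorem closure_Ioo_diff_cantorSet : closure (Ioo (0 : ℝ) 1 \ cantorSet) = Icc 0 1 := by
  refine subset_antisymm ?_ fun x hx => Metric.mem_closure_iff.2 fun ε hε => ?_
  · exact (closure_mono sdiff_subset).trans (closure_Ioo zero_ne_one).le
  obtain ⟨n, hn⟩ := exists_pow_lt_of_lt_one hε (by norm_num : (1 / 3 : ℝ) < 1)
  obtain ⟨y, hy, hxy⟩ := exists_mem_Ioo_diff_cantorSet_abs_sub_le n hx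
  exact ⟨y, hy, hxy.trans_lt hn⟩

theorem frontier_Ioo_diff_cantorSet_subset : frontier (Ioo (0 : ℝ) 1 \ cantorSet) ⊆ cantorSet := by
  intro x hx
  rw [(isOpen_Ioo.sdiff isClosed_cantorSet).frontier_eq, closure_Ioo_diff_cantorSet] at hx
  obtain ⟨⟨hx₀, hx₁⟩, hxU⟩ := hx
  by_contra hxC
  rcases hx₀.eq_or_lt with rfl | hx₀
  · exact hxC zero_mem_cantorSet
  rcases hx₁.eq_or_lt with rfl | hx₁
  · exact hxC one_mem_cantorSet
  exact hxU ⟨⟨hx₀, hx₁⟩, hxC⟩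

theorem frontier_hat_cantor_complement_connected :
    IsConnected (frontier {p : ℝ × ℝ |
        p.1 ∈ Set.Ioo (0 : ℝ) 1 \ cantorSet ∧
          |p.2| < Metric.infDist p.1 cantorSet}) := by
  have hf : Continuous fun x : ℝ => infDist x cantorSet := continuous_infDist_pt _
  have hpos : ∀ x ∈ Ioo (0 : ℝ) 1 \ cantorSet, 0 < infDist x cantorSet := fun x hx =>
    (isClosed_cantorSet.notMem_iff_infDist_pos ⟨0, zero_mem_cantorSet⟩).1 hx.2
  have hzero : ∀ x ∈ frontier (Ioo (0 : ℝ) 1 \ cantorSet), infDist x cantorSet = 0 :=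
    fun x hx => infDist_zero_of_mem (frontier_Ioo_diff_cantorSet_subset hx)
  rw [frontier_setOf_abs_lt (isOpen_Ioo.sdiff isClosed_cantorSet) hf hpos hzero,
    closure_Ioo_diff_cantorSet]
  exact isConnected_setOf_abs_eq (isConnected_Icc zero_le_one) hf.continuousOn
    (fun _ _ => infDist_nonneg)
    ⟨0, left_mem_Icc.2 zero_le_one, infDist_zero_of_mem zero_mem_cantorSet⟩
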